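/- In the finite one-dimensional screening problem, suppose the surplus function s(x, θ) = u(x, θ) + v(x, θ) has weak single-crossing differences. Then the downward-IC program has the same optimal value as the program with all IC constraints (together with IR), and every optimal solution of the downward-IC program satisfies all IC constraints. -/

import Mathlib

/-!
At an optimum of the downward-IC program every type with positive rent has a binding downward
constraint, since otherwise its transfer could be raised. Suppose the optimal allocation drops
from a type `i`, maximal among the types below it, to `i + 1`. Weak single-crossing of the
surplus then yields an improvement: either type `i + 1` is moved up to `x i` keeping its rent
(the surplus gain of `x i` at `θ i` persists at `θ (i + 1)`), or the types pooled at `x i` are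
moved down to `x (i + 1)` keeping their rents, after which every downward constraint of
`i + 1` is slack. So the optimal allocation is monotone, and the binding downward constraints
together with increasing differences give the upward constraints by induction.

The optimal values agree because an optimum exists: capping the rent of type `i` at `2 R i`,
where `R` bounds `|u|`, keeps every feasible mechanism feasible without lowering the objective,
and the capped feasible mechanisms form a compact set.
-/

open Finset

noncomputable section

/-- Feasibility for the downward-IC program: allocations in `X`, all downward IC
constraints, and all IR constraints. Indices run over `0, …, n-1`. -/
def DFeas (n : ℕ) (X : Set ℝ) (u : ℝ → ℝ → ℝ) (θ : ℕ → ℝ)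
    (x t : ℕ → ℝ) : Prop :=
  (∀ i, i < n → x i ∈ X) ∧
    (∀ i j, j < i → i < n → u (x i) (θ i) - t i ≥ u (x j) (θ i) - t j) ∧
    (∀ i, i < n → u (x i) (θ i) - t i ≥ 0)

/-- Feasibility for the program with all IC constraints and all IR constraints. -/
def FullFeas (n : ℕ) (X : Set ℝ) (u : ℝ → ℝ → ℝ) (θ : ℕ → ℝ)
    (x t : ℕ → ℝ) : Prop :=
  (∀ i, i < n → x i ∈ X) ∧
    (∀ i j, i < n → j < n → u (x i) (θ i) - t i ≥ u (x j) (θ i) - t j) ∧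
    (∀ i, i < n → u (x i) (θ i) - t i ≥ 0)

/-- The principal's objective. -/
def Obj (n : ℕ) (μ : ℕ → ℝ) (v : ℝ → ℝ → ℝ) (θ : ℕ → ℝ) (x t : ℕ → ℝ) : ℝ :=
  ∑ i ∈ range n, μ i * (v (x i) (θ i) + t i)

section

variable {n : ℕ} {X : Set ℝ} {u v : ℝ → ℝ → ℝ} {θ μ : ℕ → ℝ} {x t x' t' : ℕ → ℝ}

def StrictIncreasingDifferences (X : Set ℝ) (f : ℝ → ℝ → ℝ) : Prop :=
  ∀ y ∈ X, ∀ y' ∈ X, y < y' → ∀ a a' : ℝ, a < a' → f y' a - f y a < f y' a' - f y a'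

def WeakSingleCrossingDifferences (X : Set ℝ) (f : ℝ → ℝ → ℝ) : Prop :=
  ∀ y ∈ X, ∀ y' ∈ X, y < y' → ∀ a a' : ℝ, a < a' → 0 < f y' a - f y a → 0 < f y' a' - f y a'

theorem StrictIncreasingDifferences.le {f : ℝ → ℝ → ℝ} (hf : StrictIncreasingDifferences X f)
    {y y' : ℝ} (hy : y ∈ X) (hy' : y' ∈ X) (hyy : y ≤ y') {a a' : ℝ} (ha : a ≤ a') :
    f y' a - f y a ≤ f y' a' - f y a' := by
  rcases hyy.lt_or_eq with hyy | rfl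
  · rcases ha.lt_or_eq with ha | rfl
    · exact (hf y hy y' hy' hyy a a' ha).le
    · rfl
  · simp

theorem WeakSingleCrossingDifferences.nonpos_of_nonpos {f : ℝ → ℝ → ℝ}
    (hf : WeakSingleCrossingDifferences X f) {y y' : ℝ} (hy : y ∈ X) (hy' : y' ∈ X)
    (hyy : y < y') {a a' : ℝ} (ha : a ≤ a') (h : f y' a' - f y a' ≤ 0) :
    f y' a - f y a ≤ 0 := by
  rcases ha.lt_or_eq with ha | rfl
  · by_contra! h'
    exact (hf y hy y' hy' hyy a a' ha h').not_ge h
  · exact h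

theorem Finset.exists_pos_forall_lt {ι : Type*} (s : Finset ι) {f : ι → ℝ}
    (hf : ∀ i ∈ s, 0 < f i) : ∃ ε > 0, ∀ i ∈ s, ε < f i :=
  (eventually_mem_nhdsWithin.and <| (Filter.eventually_all_finset s).2 fun i hi =>
    (eventually_lt_nhds (hf i hi)).filter_mono nhdsWithin_le_nhds :
      ∀ᶠ ε in nhdsWithin (0 : ℝ) (Set.Ioi 0), ε ∈ Set.Ioi 0 ∧ ∀ i ∈ s, ε < f i).exists

theorem Obj_le_Obj (hμ : ∀ i < n, 0 ≤ μ i)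
    (h : ∀ i < n, v (x i) (θ i) + t i ≤ v (x' i) (θ i) + t' i) :
    Obj n μ v θ x t ≤ Obj n μ v θ x' t' :=
  sum_le_sum fun i hi => mul_le_mul_of_nonneg_left (h i (mem_range.1 hi)) (hμ i (mem_range.1 hi))

theorem Obj_lt_Obj (hμ : ∀ i < n, 0 < μ i)
    (h : ∀ i < n, v (x i) (θ i) + t i ≤ v (x' i) (θ i) + t' i) {j : ℕ} (hj : j < n)
    (hlt : v (x j) (θ j) + t j < v (x' j) (θ j) + t' j) :
    Obj n μ v θ x t < Obj n μ v θ x' t' :=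
  sum_lt_sum
    (fun i hi => mul_le_mul_of_nonneg_left (h i (mem_range.1 hi)) (hμ i (mem_range.1 hi)).le)
    ⟨j, mem_range.2 hj, mul_lt_mul_of_pos_left hlt (hμ j hj)⟩

theorem FullFeas.dFeas (h : FullFeas n X u θ x t) : DFeas n X u θ x t :=
  ⟨h.1, fun i k hki hi => h.2.1 i k hi (hki.trans hi), h.2.2⟩

theorem DFeas.exists_obj_lt_of_slack (hμ : ∀ i < n, 0 < μ i) (hD : DFeas n X u θ x t)
    {j : ℕ} (hj : j < n) (hpos : 0 < u (x j) (θ j) - t j)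
    (hslack : ∀ k < j, u (x k) (θ j) - t k < u (x j) (θ j) - t j) :
    ∃ t', DFeas n X u θ x t' ∧ Obj n μ v θ x t < Obj n μ v θ x t' := by
  obtain ⟨ε, hε, hεk⟩ := (range j).exists_pos_forall_lt
    (f := fun k => (u (x j) (θ j) - t j) - (u (x k) (θ j) - t k))
    fun k hk => sub_pos.2 (hslack k (mem_range.1 hk))
  set δ := min ε (u (x j) (θ j) - t j)
  have hδ : 0 < δ := lt_min hε hpos
  have hδk : ∀ k < j, δ < (u (x j) (θ j) - t j) - (u (x k) (θ j) - t k) :=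
    fun k hk => (min_le_left _ _).trans_lt (hεk k (mem_range.2 hk))
  refine ⟨Function.update t j (t j + δ), ⟨hD.1, fun m k hkm hm => ?_, fun m hm => ?_⟩, ?_⟩
  · rcases eq_or_ne m j with rfl | hmj
    · simp only [Function.update_self, Function.update_of_ne hkm.ne]
      linarith [hδk k hkm]
    · rw [Function.update_of_ne hmj]
      rcases eq_or_ne k j with rfl | hkj
      · rw [Function.update_self]
        linarith [hD.2.1 m k hkm hm]
      · rw [Function.update_of_ne hkj]
        exact hD.2.1 m k hkm hm
  · rcases eq_or_ne m j with rfl | hmj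
    · rw [Function.update_self]
      linarith [min_le_right ε (u (x m) (θ m) - t m)]
    · rw [Function.update_of_ne hmj]
      exact hD.2.2 m hm
  · refine Obj_lt_Obj hμ (fun i _ => ?_) hj (by rw [Function.update_self]; linarith)
    rcases eq_or_ne i j with rfl | hij
    · rw [Function.update_self]; linarith
    · rw [Function.update_of_ne hij]

theorem DFeas.offer_le_offer (hSID : StrictIncreasingDifferences X u) (hD : DFeas n X u θ x t)
    {k i m : ℕ} (hki : k < i) (hi : i < n) (hx : x k ≤ x i) (hθ : θ i ≤ θ m) :
    u (x k) (θ m) - t k ≤ u (x i) (θ m) - t i := by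
  linarith [hD.2.1 i k hki hi, hSID.le (hD.1 k (hki.trans hi)) (hD.1 i hi) hx hθ]

def keepRent (u : ℝ → ℝ → ℝ) (θ x t x' : ℕ → ℝ) (k : ℕ) : ℝ :=
  t k + (u (x' k) (θ k) - u (x k) (θ k))

theorem rent_keepRent (u : ℝ → ℝ → ℝ) (θ x t x' : ℕ → ℝ) (k : ℕ) :
    u (x' k) (θ k) - keepRent u θ x t x' k = u (x k) (θ k) - t k := by
  unfold keepRent; ring

theorem keepRent_of_eq {k : ℕ} (h : x' k = x k) : keepRent u θ x t x' k = t k := by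
  simp [keepRent, h]

theorem DFeas.keepRent_of_offer_le (hD : DFeas n X u θ x t) (hx' : ∀ i < n, x' i ∈ X)
    (hoffer : ∀ m k, k < m → m < n →
      ∃ l < m, u (x' k) (θ m) - keepRent u θ x t x' k ≤ u (x l) (θ m) - t l) :
    DFeas n X u θ x' (keepRent u θ x t x') := by
  refine ⟨hx', fun m k hkm hm => ?_, fun m hm => ?_⟩
  · obtain ⟨l, hlm, hl⟩ := hoffer m k hkm hm
    linarith [rent_keepRent u θ x t x' m, hD.2.1 m l hlm hm]
  · rw [ge_iff_le, rent_keepRent]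
    exact hD.2.2 m hm

theorem DFeas.keepRent_of_le (hSID : StrictIncreasingDifferences X u)
    (hθ : StrictMonoOn θ (Set.Iio n)) (hD : DFeas n X u θ x t) (hx' : ∀ i < n, x' i ∈ X)
    (hle : ∀ i < n, x' i ≤ x i) : DFeas n X u θ x' (keepRent u θ x t x') := by
  refine hD.keepRent_of_offer_le hx' fun m k hkm hm => ⟨k, hkm, ?_⟩
  have hk : k < n := hkm.trans hm
  have := hSID.le (hx' k hk) (hD.1 k hk) (hle k hk) (hθ.monotoneOn hk hm hkm.le)
  unfold keepRent
  linarith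

def IsDownwardOptimal (n : ℕ) (X : Set ℝ) (u v : ℝ → ℝ → ℝ) (θ μ : ℕ → ℝ)
    (x t : ℕ → ℝ) : Prop :=
  DFeas n X u θ x t ∧ ∀ x' t', DFeas n X u θ x' t' → Obj n μ v θ x' t' ≤ Obj n μ v θ x t

namespace IsDownwardOptimal

theorem exists_binding (hμ : ∀ i < n, 0 < μ i) (hopt : IsDownwardOptimal n X u v θ μ x t)
    {j : ℕ} (hj : j < n) (hpos : 0 < u (x j) (θ j) - t j) :
    ∃ k < j, u (x j) (θ j) - t j ≤ u (x k) (θ j) - t k := by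
  by_contra! hslack
  obtain ⟨t', hD', hlt⟩ := hopt.1.exists_obj_lt_of_slack hμ hj hpos hslack
  exact (hopt.2 x t' hD').not_gt hlt

theorem rent_succ_le (hμ : ∀ i < n, 0 < μ i) (hθ : StrictMonoOn θ (Set.Iio n))
    (humono : ∀ y ∈ X, Monotone (u y)) (hSID : StrictIncreasingDifferences X u)
    (hopt : IsDownwardOptimal n X u v θ μ x t) {i : ℕ} (hi : i + 1 < n)
    (hmax : ∀ k ≤ i, x k ≤ x i) :
    u (x (i + 1)) (θ (i + 1)) - t (i + 1) ≤ u (x i) (θ (i + 1)) - t i := by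
  have hθi : θ i ≤ θ (i + 1) := hθ.monotoneOn (by omega : i < n) hi (by omega)
  rcases le_or_gt (u (x (i + 1)) (θ (i + 1)) - t (i + 1)) 0 with hneg | hpos
  · linarith [hopt.1.2.2 i (by omega), humono (x i) (hopt.1.1 i (by omega)) hθi]
  · obtain ⟨k, hk, hbind⟩ := hopt.exists_binding hμ hi hpos
    rcases (Nat.lt_succ_iff.1 hk).lt_or_eq with hki | rfl
    · exact hbind.trans (hopt.1.offer_le_offer hSID hki (by omega) (hmax k hki.le) hθi)
    · exact hbind

theorem surplus_le_of_succ_lt (hμ : ∀ i < n, 0 < μ i) (hθ : StrictMonoOn θ (Set.Iio n))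
    (humono : ∀ y ∈ X, Monotone (u y)) (hSID : StrictIncreasingDifferences X u)
    (hWSCD : WeakSingleCrossingDifferences X fun y a => u y a + v y a)
    (hopt : IsDownwardOptimal n X u v θ μ x t) {i : ℕ} (hi : i + 1 < n)
    (hmax : ∀ k ≤ i, x k ≤ x i) (hlt : x (i + 1) < x i) :
    u (x i) (θ i) + v (x i) (θ i) ≤ u (x (i + 1)) (θ i) + v (x (i + 1)) (θ i) := by
  by_contra! hup
  set j := i + 1
  have hxi : x i ∈ X := hopt.1.1 i (by omega)
  have hgain := hWSCD _ (hopt.1.1 j hi) _ hxi hlt _ _ (hθ (by omega : i < n) hi (by omega))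
    (by linarith)
  have hrent := hopt.rent_succ_le hμ hθ humono hSID hi hmax
  set x' := Function.update x j (x i)
  have hx'j : x' j = x i := Function.update_self j _ x
  have hx' : ∀ k ≠ j, x' k = x k := fun k hk => Function.update_of_ne hk _ x
  have hD' : DFeas n X u θ x' (keepRent u θ x t x') := by
    refine hopt.1.keepRent_of_offer_le (fun k hk => ?_) fun m k hkm hm => ?_
    · rcases eq_or_ne k j with rfl | hkj
      · rwa [hx'j]
      · exact hx' k hkj ▸ hopt.1.1 k hk
    · rcases eq_or_ne k j with rfl | hkj
      · refine ⟨i, by omega, ?_⟩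
        simp only [keepRent, hx'j]
        linarith
      · exact ⟨k, hkm, by rw [keepRent_of_eq (hx' k hkj), hx' k hkj]⟩
  refine (hopt.2 x' _ hD').not_gt (Obj_lt_Obj hμ (fun k _ => ?_) hi ?_)
  · rcases eq_or_ne k j with rfl | hkj
    · simp only [keepRent, hx'j]
      linarith
    · rw [keepRent_of_eq (hx' k hkj), hx' k hkj]
  · simp only [keepRent, hx'j]
    linarith

theorem surplus_lt_of_succ_lt (hμ : ∀ i < n, 0 < μ i) (hθ : StrictMonoOn θ (Set.Iio n))
    (humono : ∀ y ∈ X, Monotone (u y)) (hSID : StrictIncreasingDifferences X u)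
    (hWSCD : WeakSingleCrossingDifferences X fun y a => u y a + v y a)
    (hopt : IsDownwardOptimal n X u v θ μ x t) {i : ℕ} (hi : i + 1 < n)
    (hmax : ∀ k ≤ i, x k ≤ x i) (hlt : x (i + 1) < x i) :
    u (x (i + 1)) (θ i) + v (x (i + 1)) (θ i) < u (x i) (θ i) + v (x i) (θ i) := by
  by_contra! hdown
  set j := i + 1
  have hxi : x i ∈ X := hopt.1.1 i (by omega)
  have hxj : x j ∈ X := hopt.1.1 j hi
  have hθij : θ i < θ j := hθ (by omega : i < n) hi (by omega)
  set x' : ℕ → ℝ := fun k => if k ≤ i ∧ x k = x i then x j else x k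
  have hx'j : x' j = x j := if_neg fun h => by omega
  have hD' : DFeas n X u θ x' (keepRent u θ x t x') := by
    refine hopt.1.keepRent_of_le hSID hθ (fun k hk => ?_) fun k hk => ?_
    · by_cases hpool : k ≤ i ∧ x k = x i
      · simpa only [x', if_pos hpool] using hxj
      · simpa only [x', if_neg hpool] using hopt.1.1 k hk
    · by_cases hpool : k ≤ i ∧ x k = x i
      · simpa only [x', if_pos hpool, hpool.2] using hlt.le
      · simp only [x', if_neg hpool, le_refl]
  have hObj : Obj n μ v θ x t ≤ Obj n μ v θ x' (keepRent u θ x t x') := by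
    refine Obj_le_Obj (fun k hk => (hμ k hk).le) fun k hk => ?_
    by_cases hpool : k ≤ i ∧ x k = x i
    · have hθk : θ k ≤ θ i := hθ.monotoneOn hk (by omega : i < n) hpool.1
      have := hWSCD.nonpos_of_nonpos hxj hxi hlt hθk (by linarith)
      simp only [keepRent, x', if_pos hpool, hpool.2]
      linarith
    · simp only [keepRent, x', if_neg hpool]
      linarith
  have hICji := hopt.1.2.1 j i (by omega) hi
  have hpos : 0 < u (x' j) (θ j) - keepRent u θ x t x' j := by
    rw [rent_keepRent]
    linarith [hopt.1.2.2 i (by omega), hSID _ hxj _ hxi hlt _ _ hθij, humono _ hxj hθij.le]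
  have hslack : ∀ k < j,
      u (x' k) (θ j) - keepRent u θ x t x' k < u (x' j) (θ j) - keepRent u θ x t x' j := by
    intro k hk
    have hkn : k < n := hk.trans hi
    have hθkj : θ k < θ j := hθ hkn hi hk
    rw [rent_keepRent]
    by_cases hpool : k ≤ i ∧ x k = x i
    · have hICjk := hopt.1.2.1 j k hk hi
      simp only [keepRent, x', if_pos hpool, hpool.2] at hICjk ⊢
      linarith [hSID _ hxj _ hxi hlt _ _ hθkj]
    · have hki : k < i := by
        refine lt_of_le_of_ne (by omega) fun hki => hpool ⟨hki.le, by rw [hki]⟩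
      have hxk : x k < x i := lt_of_le_of_ne (hmax k hki.le) fun h => hpool ⟨hki.le, h⟩
      simp only [keepRent, x', if_neg hpool]
      linarith [hopt.1.2.1 i k hki (by omega), hSID _ (hopt.1.1 k hkn) _ hxi hxk _ _ hθij]
  obtain ⟨t'', hD'', hgt⟩ := hD'.exists_obj_lt_of_slack hμ hi hpos hslack
  exact (hopt.2 x' t'' hD'').not_gt (hObj.trans_lt hgt)

theorem alloc_le_succ (hμ : ∀ i < n, 0 < μ i) (hθ : StrictMonoOn θ (Set.Iio n))
    (humono : ∀ y ∈ X, Monotone (u y)) (hSID : StrictIncreasingDifferences X u)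
    (hWSCD : WeakSingleCrossingDifferences X fun y a => u y a + v y a)
    (hopt : IsDownwardOptimal n X u v θ μ x t) {i : ℕ} (hi : i + 1 < n)
    (hmax : ∀ k ≤ i, x k ≤ x i) : x i ≤ x (i + 1) := by
  by_contra! hlt
  exact (hopt.surplus_le_of_succ_lt hμ hθ humono hSID hWSCD hi hmax hlt).not_gt
    (hopt.surplus_lt_of_succ_lt hμ hθ humono hSID hWSCD hi hmax hlt)

theorem monotoneOn_alloc (hμ : ∀ i < n, 0 < μ i) (hθ : StrictMonoOn θ (Set.Iio n))
    (humono : ∀ y ∈ X, Monotone (u y)) (hSID : StrictIncreasingDifferences X u)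
    (hWSCD : WeakSingleCrossingDifferences X fun y a => u y a + v y a)
    (hopt : IsDownwardOptimal n X u v θ μ x t) : MonotoneOn x (Set.Iio n) := by
  have key : ∀ j < n, ∀ k ≤ j, x k ≤ x j := by
    intro j
    induction j with
    | zero => intro _ k hk; rw [Nat.le_zero.1 hk]
    | succ j ih =>
      intro hj k hk
      have hstep := hopt.alloc_le_succ hμ hθ humono hSID hWSCD hj (ih (by omega))
      rcases hk.lt_or_eq with hk | rfl
      · exact (ih (by omega) k (by omega)).trans hstep
      · rfl
  exact fun k _ j hj hkj => key j hj k hkj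

theorem upward_ic (hμ : ∀ i < n, 0 < μ i) (hθ : StrictMonoOn θ (Set.Iio n))
    (humono : ∀ y ∈ X, Monotone (u y)) (hSID : StrictIncreasingDifferences X u)
    (hWSCD : WeakSingleCrossingDifferences X fun y a => u y a + v y a)
    (hopt : IsDownwardOptimal n X u v θ μ x t) {i j : ℕ} (hij : i < j) (hj : j < n) :
    u (x j) (θ i) - t j ≤ u (x i) (θ i) - t i := by
  have hmono := hopt.monotoneOn_alloc hμ hθ humono hSID hWSCD
  induction j using Nat.strong_induction_on with
  | _ j ih =>
  have hxj : x j ∈ X := hopt.1.1 j hj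
  have hθij : θ i < θ j := hθ (hij.trans hj) hj hij
  rcases le_or_gt (u (x j) (θ j) - t j) 0 with hneg | hpos
  · linarith [hopt.1.2.2 i (hij.trans hj), humono _ hxj hθij.le]
  · obtain ⟨k, hkj, hbind⟩ := hopt.exists_binding hμ hj hpos
    have hkn : k < n := hkj.trans hj
    have hID := hSID.le (hopt.1.1 k hkn) hxj (hmono hkn hj hkj.le) hθij.le
    have hoffer : u (x k) (θ i) - t k ≤ u (x i) (θ i) - t i := by
      rcases lt_trichotomy k i with hki | rfl | hik
      · exact hopt.1.2.1 i k hki (hij.trans hj)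
      · rfl
      · exact ih k hkj hik hkn
    linarith

theorem fullFeas (hμ : ∀ i < n, 0 < μ i) (hθ : StrictMonoOn θ (Set.Iio n))
    (humono : ∀ y ∈ X, Monotone (u y)) (hSID : StrictIncreasingDifferences X u)
    (hWSCD : WeakSingleCrossingDifferences X fun y a => u y a + v y a)
    (hopt : IsDownwardOptimal n X u v θ μ x t) : FullFeas n X u θ x t := by
  refine ⟨hopt.1.1, fun i j hi hj => ?_, hopt.1.2.2⟩
  rcases lt_trichotomy j i with hji | rfl | hij
  · exact hopt.1.2.1 i j hji hi
  · exact le_rfl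
  · exact hopt.upward_ic hμ hθ humono hSID hWSCD hij hj

end IsDownwardOptimal

-- Indices `i ≥ n` are pinned to `0` so that the box is compact.
def mechanismBox (n : ℕ) (X : Set ℝ) (C : ℝ) : Set ((ℕ → ℝ) × (ℕ → ℝ)) :=
  (Set.univ.pi fun i => if i < n then X else {0}) ×ˢ Set.univ.pi fun _ => Set.Icc (-C) C

theorem isCompact_mechanismBox (hX : IsCompact X) (C : ℝ) : IsCompact (mechanismBox n X C) :=
  (isCompact_univ_pi fun i => by split_ifs; exacts [hX, isCompact_singleton]).prod
    (isCompact_univ_pi fun _ => isCompact_Icc)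

theorem mem_of_mem_mechanismBox {C : ℝ} {p : (ℕ → ℝ) × (ℕ → ℝ)} (hp : p ∈ mechanismBox n X C)
    {i : ℕ} (hi : i < n) : p.1 i ∈ X := by
  simpa only [if_pos hi] using hp.1 i (Set.mem_univ i)

theorem ContinuousOn.comp_fst_apply {f : ℝ → ℝ → ℝ}
    (hf : ContinuousOn (fun q : ℝ × ℝ => f q.1 q.2) (X ×ˢ Set.univ))
    {B : Set ((ℕ → ℝ) × (ℕ → ℝ))} {k : ℕ} (hB : ∀ p ∈ B, p.1 k ∈ X) (a : ℝ) :
    ContinuousOn (fun p : (ℕ → ℝ) × (ℕ → ℝ) => f (p.1 k) a) B :=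
  hf.comp (by fun_prop : Continuous fun p : (ℕ → ℝ) × (ℕ → ℝ) => (p.1 k, a)).continuousOn
    fun p hp => ⟨hB p hp, trivial⟩

theorem IsCompact.exists_bound_at_types (hX : IsCompact X)
    (huc : ContinuousOn (fun q : ℝ × ℝ => u q.1 q.2) (X ×ˢ Set.univ)) (n : ℕ) (θ : ℕ → ℝ) :
    ∃ R, 0 ≤ R ∧ ∀ i < n, ∀ y ∈ X, |u y (θ i)| ≤ R := by
  obtain ⟨C, hC⟩ := (hX.prod ((Set.finite_Iio n).image θ).isCompact).exists_bound_of_continuousOn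
    (huc.mono (Set.prod_mono le_rfl (Set.subset_univ _)))
  exact ⟨max C 0, le_max_right _ _, fun i hi y hy =>
    (hC (y, θ i) ⟨hy, i, hi, rfl⟩).trans (le_max_left _ _)⟩

theorem DFeas.exists_mem_mechanismBox (hμ : ∀ i < n, 0 ≤ μ i) {R : ℝ} (hR0 : 0 ≤ R)
    (hR : ∀ i < n, ∀ y ∈ X, |u y (θ i)| ≤ R) {x t : ℕ → ℝ} (hD : DFeas n X u θ x t) :
    ∃ p ∈ mechanismBox n X (R + 2 * R * n),
      DFeas n X u θ p.1 p.2 ∧ Obj n μ v θ x t ≤ Obj n μ v θ p.1 p.2 := by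
  -- Capping the rent of type `i` at `2 R i` keeps downward IC: a deviation gains at most `2 R`.
  set U : ℕ → ℝ := fun i => min (u (x i) (θ i) - t i) (2 * R * i)
  have hU0 : ∀ i < n, 0 ≤ U i := fun i hi => le_min (hD.2.2 i hi) (by positivity)
  have hUn : ∀ i < n, U i ≤ 2 * R * n := fun i hi =>
    (min_le_right _ _).trans (by gcongr)
  have hUk : ∀ i k, k < i → i < n → U k + (u (x k) (θ i) - u (x k) (θ k)) ≤ U i := by
    intro i k hki hi
    have hk : k < n := hki.trans hi
    refine le_min ?_ ?_
    · linarith [min_le_left (u (x k) (θ k) - t k) (2 * R * k), hD.2.1 i k hki hi]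
    · have hki' : (k : ℝ) + 1 ≤ i := by exact_mod_cast hki
      have := abs_le.1 (hR i hi _ (hD.1 k hk))
      have := abs_le.1 (hR k hk _ (hD.1 k hk))
      nlinarith [min_le_right (u (x k) (θ k) - t k) (2 * R * k)]
  refine ⟨(fun i => if i < n then x i else 0, fun i => if i < n then u (x i) (θ i) - U i else 0),
    ⟨fun i _ => ?_, fun i _ => ?_⟩, ⟨fun i hi => ?_, fun i k hki hi => ?_, fun i hi => ?_⟩,
    Obj_le_Obj hμ fun i hi => ?_⟩
  · by_cases hi : i < n <;> simp [hi, hD.1 i]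
  · by_cases hi : i < n
    · have := abs_le.1 (hR i hi _ (hD.1 i hi))
      simp only [if_pos hi, Set.mem_Icc]
      constructor <;> linarith [hU0 i hi, hUn i hi]
    · have : 0 ≤ R + 2 * R * n := by positivity
      simp only [if_neg hi, Set.mem_Icc]
      constructor <;> linarith
  · simpa only [if_pos hi] using hD.1 i hi
  · simp only [if_pos hi, if_pos (hki.trans hi)]
    linarith [hUk i k hki hi]
  · simp only [if_pos hi]
    linarith [hU0 i hi]
  · simp only [if_pos hi]
    linarith [min_le_left (u (x i) (θ i) - t i) (2 * R * i)]

theorem continuousOn_obj (hv : ContinuousOn (fun q : ℝ × ℝ => v q.1 q.2) (X ×ˢ Set.univ))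
    {B : Set ((ℕ → ℝ) × (ℕ → ℝ))} (hB : ∀ p ∈ B, ∀ i < n, p.1 i ∈ X) :
    ContinuousOn (fun p : (ℕ → ℝ) × (ℕ → ℝ) => Obj n μ v θ p.1 p.2) B :=
  continuousOn_finsetSum _ fun i hi => continuousOn_const.mul
    ((hv.comp_fst_apply (fun p hp => hB p hp i (mem_range.1 hi)) _).add
      (by fun_prop : Continuous fun p : (ℕ → ℝ) × (ℕ → ℝ) => p.2 i).continuousOn)

theorem DFeas.exists_isDownwardOptimal (hX : IsCompact X)
    (huc : ContinuousOn (fun q : ℝ × ℝ => u q.1 q.2) (X ×ˢ Set.univ))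
    (hvc : ContinuousOn (fun q : ℝ × ℝ => v q.1 q.2) (X ×ˢ Set.univ))
    (hμ : ∀ i < n, 0 ≤ μ i) {x₀ t₀ : ℕ → ℝ} (hD₀ : DFeas n X u θ x₀ t₀) :
    ∃ x t, IsDownwardOptimal n X u v θ μ x t := by
  obtain ⟨R, hR0, hR⟩ := hX.exists_bound_at_types huc n θ
  set B := mechanismBox n X (R + 2 * R * n)
  set K := {p ∈ B | DFeas n X u θ p.1 p.2}
  have hoffer : ∀ k < n, ∀ a, ContinuousOn (fun p : (ℕ → ℝ) × (ℕ → ℝ) => u (p.1 k) a - p.2 k) B :=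
    fun k hk a => (huc.comp_fst_apply (fun p hp => mem_of_mem_mechanismBox hp hk) a).sub
      (by fun_prop : Continuous fun p : (ℕ → ℝ) × (ℕ → ℝ) => p.2 k).continuousOn
  have hKclosed : IsClosed K := isClosed_of_closure_subset fun p hp => by
    have hpB : p ∈ B :=
      closure_minimal (Set.sep_subset _ _) (isCompact_mechanismBox hX _).isClosed hp
    have hle : ∀ {f g : (ℕ → ℝ) × (ℕ → ℝ) → ℝ}, ContinuousOn f B → ContinuousOn g B →
        (∀ q ∈ K, f q ≤ g q) → f p ≤ g p := fun hf hg =>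
      ContinuousWithinAt.closure_le hp ((hf p hpB).mono (Set.sep_subset _ _))
        ((hg p hpB).mono (Set.sep_subset _ _))
    exact ⟨hpB, fun i hi => mem_of_mem_mechanismBox hpB hi,
      fun i k hki hi => hle (hoffer k (hki.trans hi) _) (hoffer i hi _)
        fun q hq => hq.2.2.1 i k hki hi,
      fun i hi => hle continuousOn_const (hoffer i hi _) fun q hq => hq.2.2.2 i hi⟩
  have hK : IsCompact K :=
    (isCompact_mechanismBox hX _).of_isClosed_subset hKclosed (Set.sep_subset _ _)
  obtain ⟨p₀, hp₀B, hp₀D, -⟩ := hD₀.exists_mem_mechanismBox (v := v) hμ hR0 hR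
  obtain ⟨p, hpK, hpmax⟩ := hK.exists_isMaxOn ⟨p₀, hp₀B, hp₀D⟩
    (continuousOn_obj hvc fun q hq i hi => hq.2.1 i hi)
  refine ⟨p.1, p.2, hpK.2, fun x t hD => ?_⟩
  obtain ⟨q, hqB, hqD, hle⟩ := hD.exists_mem_mechanismBox hμ hR0 hR
  exact hle.trans (hpmax ⟨hqB, hqD⟩)

end

theorem sSup_eq_sSup_of_subset_of_isGreatest {s t : Set ℝ} (hts : t ⊆ s)
    (h : s.Nonempty → ∃ a ∈ t, IsGreatest s a) : sSup s = sSup t := by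
  rcases s.eq_empty_or_nonempty with rfl | hs
  · rw [Set.subset_empty_iff.1 hts]
  · obtain ⟨a, hat, ha⟩ := h hs
    rw [ha.csSup_eq, IsGreatest.csSup_eq ⟨hat, fun b hb => ha.2 (hts hb)⟩]

theorem stmt4
    (n : ℕ) (X : Set ℝ) (hX : IsCompact X)
    (θ μ : ℕ → ℝ)
    (hθ : ∀ i j, i < j → j < n → θ i < θ j)
    (hμpos : ∀ i, i < n → 0 < μ i)
    (u v : ℝ → ℝ → ℝ)
    (huc : ContinuousOn (fun p : ℝ × ℝ => u p.1 p.2) (X ×ˢ Set.univ))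
    (hvc : ContinuousOn (fun p : ℝ × ℝ => v p.1 p.2) (X ×ˢ Set.univ))
    (humono : ∀ x ∈ X, Monotone (u x))
    (hSID : ∀ x ∈ X, ∀ x' ∈ X, x < x' → ∀ a a' : ℝ, a < a' →
      u x' a - u x a < u x' a' - u x a')
    (hWSCD : ∀ x ∈ X, ∀ x' ∈ X, x < x' → ∀ a a' : ℝ, a < a' →
      0 < (u x' a + v x' a) - (u x a + v x a) →
      0 < (u x' a' + v x' a') - (u x a' + v x a')) :
    sSup {p : ℝ | ∃ x t : ℕ → ℝ, DFeas n X u θ x t ∧ p = Obj n μ v θ x t} =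
      sSup {p : ℝ | ∃ x t : ℕ → ℝ, FullFeas n X u θ x t ∧ p = Obj n μ v θ x t} ∧
    ∀ x t : ℕ → ℝ, DFeas n X u θ x t →
      (∀ x' t' : ℕ → ℝ, DFeas n X u θ x' t' → Obj n μ v θ x' t' ≤ Obj n μ v θ x t) →
      ∀ i j, i < n → j < n → u (x i) (θ i) - t i ≥ u (x j) (θ i) - t j := by
  have hfull : ∀ x t, IsDownwardOptimal n X u v θ μ x t → FullFeas n X u θ x t :=
    fun x t hopt => hopt.fullFeas hμpos (fun i _ j hj hij => hθ i j hij hj) humono hSID hWSCD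
  refine ⟨sSup_eq_sSup_of_subset_of_isGreatest (fun p ⟨x, t, hF, hp⟩ => ⟨x, t, hF.dFeas, hp⟩) ?_,
    fun x t hD hopt => (hfull x t ⟨hD, hopt⟩).2.1⟩
  rintro ⟨-, x₀, t₀, hD₀, -⟩
  obtain ⟨x, t, hopt⟩ := hD₀.exists_isDownwardOptimal hX huc hvc fun i hi => (hμpos i hi).le
  refine ⟨Obj n μ v θ x t, ⟨x, t, hfull x t hopt, rfl⟩, ⟨x, t, hopt.1, rfl⟩, ?_⟩
  rintro _ ⟨x', t', hD', rfl⟩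
  exact hopt.2 x' t' hD'
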